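/- Let {(X_n, d_n)}_{n∈ℕ} be a sequence of nonempty compact metric spaces such that: (1) there is a constant K > 0 with diam(X_n) ≤ K for all n; and (2) for every ε > 0 there is N(ε) ∈ ℕ such that every X_n can be covered by at most N(ε) metric balls of radius ε. Consider the associated standard fuzzy metric spaces (X_n, M_{d_n}, ·), where M_{d_n}(x,y,t) = t/(t + d_n(x,y)) for t > 0 and M_{d_n}(x,y,0) = 0, with the product t-norm. Then: (a) the function C(s) = s/(s+K) is continuous, nondecreasing, and satisfies 0 < C(s) ≤ diam_s(X_n) for all s > 0 and all n; (b) for every t > 0 and 0 < ε < 1, cov(X_n, ε, t) ≤ N(εt/(1−ε)) for all n; (c) for every t > 0, every n,m ∈ ℕ, all points x_i^n, x_j^n ∈ X_n, x_i^m, x_j^m ∈ X_m, and every s > t, if M_{d_n}(x_i^n,x_j^n,s) < M_{d_m}(x_i^m,x_j^m,s) then M_{d_n}(x_i^n,x_j^n,s)/M_{d_m}(x_i^m,x_j^m,s) ≥ M_{d_n}(x_i^n,x_j^n,t)/M_{d_m}(x_i^m,x_j^m,t). Consequently, the sequence {(X_n, M_{d_n}, ·)} has a Cauchy subsequence with respect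 to the non-Archimedean Gromov–Hausdorff fuzzy distance M_GH. -/
import Mathlib


open Set

/-- A continuous t-norm on `[0,1]`. -/
structure IsContinuousTNorm (star : ℝ → ℝ → ℝ) : Prop where
  mem : ∀ a ∈ Icc (0:ℝ) 1, ∀ b ∈ Icc (0:ℝ) 1, star a b ∈ Icc (0:ℝ) 1
  comm : ∀ a ∈ Icc (0:ℝ) 1, ∀ b ∈ Icc (0:ℝ) 1, star a b = star b a
  assoc : ∀ a ∈ Icc (0:ℝ) 1, ∀ b ∈ Icc (0:ℝ) 1, ∀ c ∈ Icc (0:ℝ) 1,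
    star (star a b) c = star a (star b c)
  one : ∀ a ∈ Icc (0:ℝ) 1, star a 1 = a
  mono : ∀ a b c d : ℝ, a ∈ Icc (0:ℝ) 1 → b ∈ Icc (0:ℝ) 1 → c ∈ Icc (0:ℝ) 1 →
    d ∈ Icc (0:ℝ) 1 → a ≤ c → b ≤ d → star a b ≤ star c d
  continuous : ContinuousOn (fun p : ℝ × ℝ => star p.1 p.2) (Icc 0 1 ×ˢ Icc 0 1)

/-- A fuzzy metric in the sense of Kramosil and Michalek: `M x y t` is the degree of
nearness of `x` and `y` at time `t ≥ 0`. -/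
structure IsFuzzyMetric {X : Type*} (star : ℝ → ℝ → ℝ) (M : X → X → ℝ → ℝ) : Prop where
  range : ∀ x y t, 0 ≤ t → M x y t ∈ Icc (0:ℝ) 1
  km1 : ∀ x y, M x y 0 = 0
  km2 : ∀ x y, (∀ t, 0 < t → M x y t = 1) ↔ x = y
  km3 : ∀ x y t, M x y t = M y x t
  km4 : ∀ x y z t s, 0 < t → 0 < s → star (M x y t) (M y z s) ≤ M x z (t + s)
  km5 : ∀ x y t, 0 < t → ContinuousWithinAt (M x y) (Iio t) t

/-- A non-Archimedean fuzzy metric: (KM4) is replaced by the stronger (NA). -/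
structure IsNAFuzzyMetric {X : Type*} (star : ℝ → ℝ → ℝ) (M : X → X → ℝ → ℝ) : Prop where
  range : ∀ x y t, 0 ≤ t → M x y t ∈ Icc (0:ℝ) 1
  km1 : ∀ x y, M x y 0 = 0
  km2 : ∀ x y, (∀ t, 0 < t → M x y t = 1) ↔ x = y
  km3 : ∀ x y t, M x y t = M y x t
  na : ∀ x y z t s, 0 < t → 0 < s → star (M x y t) (M y z s) ≤ M x z (max t s)
  km5 : ∀ x y t, 0 < t → ContinuousWithinAt (M x y) (Iio t) t

/-- The open ball `B_M(x, ε, t)`. -/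
def fuzzyBall {X : Type*} (M : X → X → ℝ → ℝ) (x : X) (ε t : ℝ) : Set X :=
  {y | 1 - ε < M x y t}

/-- The topology on `X` is the one induced by the fuzzy metric `M`, i.e. the open balls
form a neighbourhood basis at every point. -/
def FuzzyCompatible {X : Type*} [TopologicalSpace X] (M : X → X → ℝ → ℝ) : Prop :=
  ∀ x : X, (nhds x).HasBasis (fun p : ℝ × ℝ => 0 < p.1 ∧ p.1 < 1 ∧ 0 < p.2)
    (fun p => fuzzyBall M x p.1 p.2)

/-- The Hausdorff fuzzy distance between two subsets of a fuzzy metric space. -/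
noncomputable def fuzzyHSet {X : Type*} (M : X → X → ℝ → ℝ) (A B : Set X) (t : ℝ) : ℝ :=
  min (⨅ a : A, ⨆ b : B, M a b t) (⨅ b : B, ⨆ a : A, M a b t)

/-- The Hausdorff fuzzy distance between the two parts of a disjoint union `X ⊕ Y`. -/
noncomputable def fuzzyH {X Y : Type*} (M : (X ⊕ Y) → (X ⊕ Y) → ℝ → ℝ) (t : ℝ) : ℝ :=
  min (⨅ x : X, ⨆ y : Y, M (Sum.inl x) (Sum.inr y) t)
    (⨅ y : Y, ⨆ x : X, M (Sum.inl x) (Sum.inr y) t)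

/-- A non-Archimedean fuzzy metric on the disjoint union `X ⊕ Y` is admissible if it
restricts to the given fuzzy metrics on `X` and on `Y`. -/
def IsAdmissible {X Y : Type*} (star : ℝ → ℝ → ℝ) (MX : X → X → ℝ → ℝ)
    (MY : Y → Y → ℝ → ℝ) (M : (X ⊕ Y) → (X ⊕ Y) → ℝ → ℝ) : Prop :=
  IsNAFuzzyMetric star M ∧
    (∀ x x' t, 0 ≤ t → M (Sum.inl x) (Sum.inl x') t = MX x x' t) ∧
    (∀ y y' t, 0 ≤ t → M (Sum.inr y) (Sum.inr y') t = MY y y' t)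

/-- The non-Archimedean Gromov-Hausdorff fuzzy distance. -/
noncomputable def MGH {X Y : Type*} (star : ℝ → ℝ → ℝ) (MX : X → X → ℝ → ℝ)
    (MY : Y → Y → ℝ → ℝ) (t : ℝ) : ℝ :=
  sSup ((fun M => fuzzyH M t) '' {M | IsAdmissible star MX MY M})

/-- The `t`-diameter of a fuzzy metric space. -/
noncomputable def fuzzyDiam {X : Type*} (M : X → X → ℝ → ℝ) (s : ℝ) : ℝ :=
  ⨅ p : X × X, M p.1 p.2 s

/-- `cov(X, ε, t) ≤ N` : `X` can be covered by at most `N` balls `B(c, ε, t)`. -/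
def CovLE {X : Type*} (M : X → X → ℝ → ℝ) (ε t : ℝ) (N : ℕ) : Prop :=
  ∃ C : Finset X, C.card ≤ N ∧ ∀ x : X, ∃ c ∈ C, 1 - ε < M c x t

/-- Property (TN1) of a t-norm: `a - a ∗ b ≥ a ∗ (1 - b)`. -/
def TN1 (star : ℝ → ℝ → ℝ) : Prop :=
  ∀ a ∈ Icc (0:ℝ) 1, ∀ b ∈ Icc (0:ℝ) 1, star a (1 - b) ≤ a - star a b

/-- The standard fuzzy metric associated to a metric space. -/
noncomputable def stdFuzzy {X : Type*} [MetricSpace X] (x y : X) (t : ℝ) : ℝ :=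
  if 0 < t then t / (t + dist x y) else 0


section Auxiliary

open Metric GromovHausdorff

/-- Core inequality for the NA property of standard-like fuzzy metrics. -/
lemma na_core {t s d1 d2 d : ℝ} (ht : 0 < t) (hs : 0 < s)
    (hd1 : 0 ≤ d1) (hd2 : 0 ≤ d2) (hd : 0 ≤ d) (htri : d ≤ d1 + d2) :
    (t / (t + d1)) * (s / (s + d2)) ≤ max t s / (max t s + d) := by
  have h1 : 0 < t + d1 := by linarith
  have h2 : 0 < s + d2 := by linarith
  have hm : 0 < max t s := lt_max_of_lt_left ht
  have hmd : 0 < max t s + d := by linarith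
  rw [div_mul_div_comm, div_le_div_iff₀ (by positivity) hmd]
  rcases le_total t s with h | h
  · rw [max_eq_right h]
    nlinarith [mul_nonneg (mul_nonneg ht.le hs.le) (sub_nonneg.2 htri),
      mul_nonneg (mul_nonneg (sub_nonneg.2 h) hs.le) hd1,
      mul_nonneg hs.le (mul_nonneg hd1 hd2)]
  · rw [max_eq_left h]
    nlinarith [mul_nonneg (mul_nonneg ht.le hs.le) (sub_nonneg.2 htri),
      mul_nonneg (mul_nonneg (sub_nonneg.2 h) ht.le) hd2,
      mul_nonneg ht.le (mul_nonneg hd1 hd2)]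

/-- The standard-like fuzzy metric built from any metric-like function is a
non-Archimedean fuzzy metric for the product t-norm. -/
lemma isNA_stdlike {W : Type*} (D : W → W → ℝ) (h0 : ∀ p, D p p = 0)
    (hsymm : ∀ p q, D p q = D q p) (hnonneg : ∀ p q, 0 ≤ D p q)
    (htri : ∀ p q r, D p r ≤ D p q + D q r) (hsep : ∀ p q, D p q = 0 → p = q) :
    IsNAFuzzyMetric (fun a b : ℝ => a * b)
      (fun p q s => if 0 < s then s / (s + D p q) else 0) where
  range p q t _ := by
    by_cases h : 0 < t
    · have hD := hnonneg p q
      simp only [if_pos h]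
      exact ⟨div_nonneg h.le (by linarith), (div_le_one (by linarith)).2 (by linarith)⟩
    · simp only [if_neg h]; exact ⟨le_refl 0, zero_le_one⟩
  km1 p q := by norm_num
  km2 p q := by
    constructor
    · intro h
      have h1 := h 1 one_pos
      simp only [if_pos one_pos] at h1
      have hD := hnonneg p q
      apply hsep
      have hne : (1 : ℝ) + D p q ≠ 0 := by linarith
      rw [div_eq_one_iff_eq hne] at h1
      linarith
    · rintro rfl t ht
      simp [if_pos ht, h0 p, ht.ne']
  km3 p q t := by simp only [hsymm p q]
  na p q r t s ht hs := by
    simp only [if_pos ht, if_pos hs, if_pos (lt_max_of_lt_left ht)]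
    exact na_core ht hs (hnonneg p q) (hnonneg q r) (hnonneg p r) (htri p q r)
  km5 p q t ht := by
    have hD := hnonneg p q
    have hg : ContinuousAt (fun s : ℝ => s / (s + D p q)) t := by
      apply ContinuousAt.div continuousAt_id (by fun_prop)
      intro h; linarith [ht]
    apply hg.continuousWithinAt.congr_of_eventuallyEq
    · filter_upwards [nhdsWithin_le_nhds (Ioi_mem_nhds ht)] with s hs
      simp [if_pos (mem_Ioi.1 hs)]
    · simp [if_pos ht]

end Auxiliary

section Auxiliary2
open Metric GromovHausdorff

/-- Any fuzzy Hausdorff distance is at most one. -/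
lemma fuzzyH_le_one {A B : Type*} [Nonempty A] [Nonempty B] {star : ℝ → ℝ → ℝ}
    {M : (A ⊕ B) → (A ⊕ B) → ℝ → ℝ} (hM : IsNAFuzzyMetric star M) {t : ℝ} (ht : 0 < t) :
    fuzzyH M t ≤ 1 := by
  inhabit A; inhabit B
  have hbddS : ∀ x : A, BddAbove (Set.range fun y : B => M (Sum.inl x) (Sum.inr y) t) := by
    intro x
    exact ⟨1, by rintro _ ⟨y, rfl⟩; exact (hM.range _ _ t ht.le).2⟩
  have hlow : BddBelow (Set.range fun x : A => ⨆ y : B, M (Sum.inl x) (Sum.inr y) t) := by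
    refine ⟨0, ?_⟩
    rintro _ ⟨x, rfl⟩
    exact le_trans (hM.range (Sum.inl x) (Sum.inr default) t ht.le).1
      (le_ciSup (hbddS x) default)
  calc fuzzyH M t ≤ ⨅ x : A, ⨆ y : B, M (Sum.inl x) (Sum.inr y) t := min_le_left _ _
    _ ≤ ⨆ y : B, M (Sum.inl default) (Sum.inr y) t := ciInf_le hlow default
    _ ≤ 1 := ciSup_le fun y => (hM.range _ _ t ht.le).2

/-- Auxiliary distance on a disjoint union: distance in an ambient space, plus a bump
`δ` for cross pairs. -/
noncomputable def sumD {A B Z : Type*} [PseudoMetricSpace Z] (f : A → Z) (g : B → Z)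
    (δ : ℝ) : A ⊕ B → A ⊕ B → ℝ :=
  fun p q => dist (Sum.elim f g p) (Sum.elim f g q) + (if p.isLeft = q.isLeft then 0 else δ)

section SumD

variable {A B Z : Type*} [PseudoMetricSpace Z] (f : A → Z) (g : B → Z) {δ : ℝ}

lemma sumD_nonneg (hδ : 0 ≤ δ) (p q : A ⊕ B) : 0 ≤ sumD f g δ p q := by
  unfold sumD; split <;> [simpa using dist_nonneg; positivity]

lemma sumD_self (p : A ⊕ B) : sumD f g δ p p = 0 := by simp [sumD]

lemma sumD_symm (p q : A ⊕ B) : sumD f g δ p q = sumD f g δ q p := by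
  unfold sumD
  rw [dist_comm]
  congr 1
  simp [eq_comm]

lemma sumD_triangle (hδ : 0 ≤ δ) (p q r : A ⊕ B) :
    sumD f g δ p r ≤ sumD f g δ p q + sumD f g δ q r := by
  have h := dist_triangle (Sum.elim f g p) (Sum.elim f g q) (Sum.elim f g r)
  unfold sumD
  rcases p with a | b <;> rcases q with a' | b' <;> rcases r with a'' | b'' <;>
    simp_all <;> linarith

lemma sumD_sep [MetricSpace A] [MetricSpace B] (hδ : 0 < δ)
    (hfZ : ∀ a a' : A, dist (f a) (f a') = dist a a')
    (hgZ : ∀ b b' : B, dist (g b) (g b') = dist b b')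
    (p q : A ⊕ B) (h : sumD f g δ p q = 0) : p = q := by
  rcases p with a | b <;> rcases q with a' | b' <;> simp [sumD, hfZ, hgZ] at h
  · exact congrArg Sum.inl h
  · exact absurd h (by positivity : (0:ℝ) < dist (f a) (g b') + δ).ne'
  · exact absurd h (by positivity : (0:ℝ) < dist (g b) (f a') + δ).ne'
  · exact congrArg Sum.inr h

lemma sumD_inl_inl [MetricSpace A] (hf : ∀ a a' : A, dist (f a) (f a') = dist a a')
    (x x' : A) : sumD f g δ (Sum.inl x) (Sum.inl x') = dist x x' := by
  simp [sumD, hf]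

lemma sumD_inr_inr [MetricSpace B] (hg : ∀ b b' : B, dist (g b) (g b') = dist b b')
    (y y' : B) : sumD f g δ (Sum.inr y) (Sum.inr y') = dist y y' := by
  simp [sumD, hg]

lemma sumD_inl_inr (x : A) (y : B) :
    sumD f g δ (Sum.inl x) (Sum.inr y) = dist (f x) (g y) + δ := by
  simp [sumD]

lemma sumD_inr_inl (x : A) (y : B) :
    sumD f g δ (Sum.inr y) (Sum.inl x) = dist (g y) (f x) + δ := by
  simp [sumD]

end SumD

/-- Key construction: if two compact spaces are GH-close, there is an admissible
non-Archimedean fuzzy metric on the disjoint union whose fuzzy Hausdorff distance is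
close to 1. -/
lemma exists_admissible_of_ghDist_lt (A B : Type u) [MetricSpace A] [CompactSpace A]
    [Nonempty A] [MetricSpace B] [CompactSpace B] [Nonempty B] {t δ : ℝ} (ht : 0 < t)
    (hδ : 0 < δ) (hgh : ghDist A B < δ) :
    ∃ M, IsAdmissible (fun a b : ℝ => a * b) (stdFuzzy (X := A)) (stdFuzzy (X := B)) M ∧
      t / (t + 2 * δ) ≤ fuzzyH M t := by
  classical
  have hisoml : Isometry (optimalGHInjl A B) := isometry_optimalGHInjl A B
  have hisomr : Isometry (optimalGHInjr A B) := isometry_optimalGHInjr A B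
  set D : A ⊕ B → A ⊕ B → ℝ := sumD (optimalGHInjl A B) (optimalGHInjr A B) δ with hDdef
  have hNA : IsNAFuzzyMetric (fun a b : ℝ => a * b)
      (fun p q s => if 0 < s then s / (s + D p q) else 0) :=
    isNA_stdlike D (sumD_self _ _) (sumD_symm _ _) (sumD_nonneg _ _ hδ.le)
      (sumD_triangle _ _ hδ.le)
      (sumD_sep _ _ hδ (fun a a' => hisoml.dist_eq a a')
        (fun b b' => hisomr.dist_eq b b'))
  refine ⟨fun p q s => if 0 < s then s / (s + D p q) else 0, ⟨hNA, ?_, ?_⟩, ?_⟩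
  · intro x x' s _
    have hdl := sumD_inl_inl (optimalGHInjl A B) (optimalGHInjr A B) (δ := δ)
      (fun a a' => hisoml.dist_eq a a')
    simp only [hDdef, hdl, stdFuzzy]
  · intro y y' s _
    have hdr := sumD_inr_inr (optimalGHInjl A B) (optimalGHInjr A B) (δ := δ)
      (fun b b' => hisomr.dist_eq b b')
    simp only [hDdef, hdr, stdFuzzy]
  -- now the lower bound on the fuzzy Hausdorff distance
  have hfin : EMetric.hausdorffEdist (Set.range (optimalGHInjl A B))
      (Set.range (optimalGHInjr A B)) ≠ ⊤ :=
    Metric.hausdorffEdist_ne_top_of_nonempty_of_bounded (Set.range_nonempty _)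
      (Set.range_nonempty _) (isCompact_range hisoml.continuous).isBounded
      (isCompact_range hisomr.continuous).isBounded
  have hH : Metric.hausdorffDist (Set.range (optimalGHInjl A B))
      (Set.range (optimalGHInjr A B)) < δ := by
    rw [hausdorffDist_optimal]; exact hgh
  have h2δ : 0 < t + 2 * δ := by linarith
  have key : ∀ (p q : A ⊕ B), D p q ≤ 2 * δ →
      t / (t + 2 * δ) ≤ (fun p q s => if 0 < s then s / (s + D p q) else 0) p q t := by
    intro p q hDle
    have hnn : 0 ≤ D p q := sumD_nonneg _ _ hδ.le p q
    simp only [if_pos ht]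
    exact div_le_div_of_nonneg_left ht.le (by linarith) (by linarith)
  have hbddS : ∀ x : A, BddAbove (Set.range fun y : B =>
      (fun p q s => if 0 < s then s / (s + D p q) else 0) (Sum.inl x) (Sum.inr y) t) := by
    intro x
    exact ⟨1, by rintro _ ⟨y, rfl⟩; exact (hNA.range _ _ t ht.le).2⟩
  have hbddS' : ∀ y : B, BddAbove (Set.range fun x : A =>
      (fun p q s => if 0 < s then s / (s + D p q) else 0) (Sum.inl x) (Sum.inr y) t) := by
    intro y
    exact ⟨1, by rintro _ ⟨x, rfl⟩; exact (hNA.range _ _ t ht.le).2⟩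
  refine le_min (le_ciInf fun x => ?_) (le_ciInf fun y => ?_)
  · obtain ⟨z, hz, hdz⟩ := Metric.exists_dist_lt_of_hausdorffDist_lt
      (Set.mem_range_self x) hH hfin
    obtain ⟨y, rfl⟩ := hz
    refine le_ciSup_of_le (hbddS x) y (key _ _ ?_)
    rw [hDdef, sumD_inl_inr]
    linarith
  · obtain ⟨z, hz, hdz⟩ := Metric.exists_dist_lt_of_hausdorffDist_lt'
      (Set.mem_range_self y) hH hfin
    obtain ⟨x, rfl⟩ := hz
    refine le_ciSup_of_le (hbddS' y) x (key _ _ ?_)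
    rw [hDdef, sumD_inl_inr]
    linarith


/-- The fuzzy Hausdorff distance of any admissible metric bounds `MGH` from below. -/
lemma fuzzyH_le_MGH {A B : Type*} [Nonempty A] [Nonempty B] (star : ℝ → ℝ → ℝ)
    (MX : A → A → ℝ → ℝ) (MY : B → B → ℝ → ℝ) {t : ℝ} (ht : 0 < t)
    {M : (A ⊕ B) → (A ⊕ B) → ℝ → ℝ} (hadm : IsAdmissible star MX MY M) :
    fuzzyH M t ≤ MGH star MX MY t := by
  apply le_csSup
  · refine ⟨1, ?_⟩
    rintro _ ⟨M', hM', rfl⟩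
    exact fuzzyH_le_one hM'.1 ht
  · exact Set.mem_image_of_mem _ hadm

end Auxiliary2

universe u

/-- Theorem `th:main3`: a uniformly bounded, uniformly totally bounded
sequence of nonempty compact metric spaces, viewed as fuzzy metric spaces via the
standard fuzzy metric with the product t-norm, satisfies conditions (a), (b), (c), and
consequently has an `M_GH`-Cauchy subsequence. -/
theorem classical_to_fuzzy_precompactness
    (X : ℕ → Type u) [∀ n, MetricSpace (X n)] [∀ n, CompactSpace (X n)]
    [∀ n, Nonempty (X n)]
    (K : ℝ) (hK : 0 < K)
    (hdiam : ∀ n, Metric.diam (Set.univ : Set (X n)) ≤ K)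
    (N : ℝ → ℕ)
    (hN : ∀ ε : ℝ, 0 < ε → ∀ n, ∃ s : Finset (X n), s.card ≤ N ε ∧
      ∀ x : X n, ∃ c ∈ s, dist x c < ε) :
    -- (a) `C(s) = s/(s+K)` is continuous, nondecreasing, and bounds the fuzzy diameters
    (MonotoneOn (fun r : ℝ => r / (r + K)) (Ici 0) ∧
      ContinuousOn (fun r : ℝ => r / (r + K)) (Ici 0) ∧
      ∀ s : ℝ, 0 < s → 0 < s / (s + K) ∧
        ∀ n, s / (s + K) ≤ fuzzyDiam (stdFuzzy (X := X n)) s) ∧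
    -- (b) bound on the fuzzy cover numbers
    (∀ t ε : ℝ, 0 < t → 0 < ε → ε < 1 →
      ∀ n, CovLE (stdFuzzy (X := X n)) ε t (N (ε * t / (1 - ε)))) ∧
    -- (c) the ratio condition
    (∀ t : ℝ, 0 < t → ∀ n m : ℕ, ∀ (xi xj : X n) (yi yj : X m), ∀ s : ℝ, t < s →
      stdFuzzy xi xj s < stdFuzzy yi yj s →
      stdFuzzy xi xj t / stdFuzzy yi yj t ≤ stdFuzzy xi xj s / stdFuzzy yi yj s) ∧
    -- consequence: an `M_GH`-Cauchy subsequence exists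
    (∃ φ : ℕ → ℕ, StrictMono φ ∧
      ∀ t ε : ℝ, 0 < t → 0 < ε → ε < 1 →
        ∃ k0 : ℕ, ∀ j k, k0 ≤ j → k0 ≤ k →
          1 - ε < MGH (fun a b : ℝ => a * b)
            (stdFuzzy (X := X (φ j))) (stdFuzzy (X := X (φ k))) t) := by
  classical
  refine ⟨⟨?_, ?_, ?_⟩, ?_, ?_, ?_⟩
  -- (a1) monotonicity
  · intro a ha b hb hab
    have ha' : (0:ℝ) ≤ a := ha
    have hb' : (0:ℝ) ≤ b := hb
    dsimp only
    rw [div_le_div_iff₀ (by linarith) (by linarith)]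
    nlinarith
  -- (a2) continuity
  · apply ContinuousOn.div continuousOn_id (by fun_prop)
    intro r hr
    have hr' : (0:ℝ) ≤ r := hr
    exact ne_of_gt (by linarith)
  -- (a3) lower bound for the fuzzy diameter
  · intro s hs
    refine ⟨by positivity, fun n => ?_⟩
    have hbdd : Bornology.IsBounded (Set.univ : Set (X n)) := isCompact_univ.isBounded
    rw [fuzzyDiam]
    refine le_ciInf fun p => ?_
    have hdle : dist p.1 p.2 ≤ K :=
      le_trans (Metric.dist_le_diam_of_mem hbdd (Set.mem_univ _) (Set.mem_univ _)) (hdiam n)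
    have hdn : (0:ℝ) ≤ dist p.1 p.2 := dist_nonneg
    simp only [stdFuzzy, if_pos hs]
    exact div_le_div_of_nonneg_left hs.le (by linarith) (by linarith)
  -- (b) covering numbers
  · intro t ε ht hε hε1 n
    have h1ε : 0 < 1 - ε := by linarith
    have hδ : 0 < ε * t / (1 - ε) := by positivity
    obtain ⟨C, hcard, hcov⟩ := hN _ hδ n
    refine ⟨C, hcard, fun x => ?_⟩
    obtain ⟨c, hc, hdist⟩ := hcov x
    refine ⟨c, hc, ?_⟩
    have hd0 : (0:ℝ) ≤ dist x c := dist_nonneg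
    have h2 : dist x c * (1 - ε) < ε * t := (lt_div_iff₀ h1ε).1 hdist
    simp only [stdFuzzy, if_pos ht, dist_comm c x]
    rw [lt_div_iff₀ (by linarith)]
    nlinarith
  -- (c) ratio monotonicity
  · intro t ht n m xi xj yi yj s hts hlt
    have hs : 0 < s := ht.trans hts
    set a := dist xi xj with ha
    set b := dist yi yj with hb
    have ha0 : 0 ≤ a := dist_nonneg
    have hb0 : 0 ≤ b := dist_nonneg
    simp only [stdFuzzy, if_pos ht, if_pos hs] at hlt ⊢
    have hba : b < a := by
      by_contra hc
      push_neg at hc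
      exact absurd hlt
        (not_lt.2 (div_le_div_of_nonneg_left hs.le (by linarith) (by linarith)))
    have hta : (0:ℝ) < t + a := by linarith
    have htb : (0:ℝ) < t + b := by linarith
    have hsa : (0:ℝ) < s + a := by linarith
    have hsb : (0:ℝ) < s + b := by linarith
    have e1 : t / (t + a) / (t / (t + b)) = (t + b) / (t + a) := by
      field_simp
    have e2 : s / (s + a) / (s / (s + b)) = (s + b) / (s + a) := by
      field_simp
    rw [e1, e2, div_le_div_iff₀ hta hsa]
    nlinarith [mul_nonneg (sub_nonneg.2 hts.le) (sub_nonneg.2 hba.le)]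
  -- (d) the Cauchy subsequence
  · set P : ℕ → GromovHausdorff.GHSpace := fun n => GromovHausdorff.toGHSpace (X n) with hP
    have hrep : ∀ n, Nonempty (X n ≃ᵢ (P n).Rep) := by
      intro n
      apply GromovHausdorff.toGHSpace_eq_toGHSpace_iff_isometryEquiv.1
      rw [GromovHausdorff.GHSpace.toGHSpace_rep]
    have htb : TotallyBounded (Set.range P) := by
      apply GromovHausdorff.totallyBounded (u := fun k : ℕ => 1 / ((k:ℝ) + 1))
        (K := fun k => N (1 / ((k:ℝ) + 1))) (C := K)
      · exact tendsto_one_div_add_atTop_nhds_zero_nat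
      · rintro p ⟨n, rfl⟩
        obtain ⟨e⟩ := hrep n
        have himg : (Set.univ : Set ((P n).Rep)) = e '' Set.univ := by
          rw [Set.image_univ, e.surjective.range_eq]
        rw [himg, e.isometry.diam_image]
        exact hdiam n
      · rintro p ⟨n, rfl⟩ k
        have hpos : 0 < 1 / ((k:ℝ) + 1) := by positivity
        obtain ⟨C, hcard, hcov⟩ := hN _ hpos n
        obtain ⟨e⟩ := hrep n
        refine ⟨↑(C.image e), ?_, ?_⟩
        · have hmk : Cardinal.mk (↑(C.image e) : Set ((P n).Rep)) = (C.image e).card :=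
            Cardinal.mk_coe_finset
          rw [hmk]
          exact_mod_cast le_trans Finset.card_image_le hcard
        · intro y _
          obtain ⟨c, hc, hd⟩ := hcov (e.symm y)
          rw [Set.mem_iUnion₂]
          refine ⟨e c, Finset.mem_coe.2 (Finset.mem_image_of_mem e hc), ?_⟩
          rw [Metric.mem_ball]
          calc dist y (e c) = dist (e (e.symm y)) (e c) := by rw [e.apply_symm_apply]
            _ = dist (e.symm y) c := e.isometry.dist_eq _ _
            _ < _ := hd
    have hcl : IsCompact (closure (Set.range P)) :=
      TotallyBounded.isCompact_of_isClosed htb.closure isClosed_closure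
    obtain ⟨l, -, φ, hφ, hconv⟩ := hcl.tendsto_subseq
      (fun n => subset_closure (Set.mem_range_self n))
    have hcauchy : CauchySeq (P ∘ φ) := hconv.cauchySeq
    refine ⟨φ, hφ, ?_⟩
    intro t ε ht hε hε1
    have h1ε : 0 < 1 - ε := by linarith
    set δ : ℝ := ε * t / (3 * (1 - ε)) with hδdef
    have hδ : 0 < δ := by positivity
    obtain ⟨k0, hk0⟩ := Metric.cauchySeq_iff.1 hcauchy δ hδ
    refine ⟨k0, fun j k hj hk => ?_⟩
    have hgh : GromovHausdorff.ghDist (X (φ j)) (X (φ k)) < δ := hk0 j hj k hk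
    obtain ⟨M, hadm, hHM⟩ :=
      exists_admissible_of_ghDist_lt (X (φ j)) (X (φ k)) ht hδ hgh
    have hle := fuzzyH_le_MGH _ _ _ ht hadm
    have hlt : 1 - ε < t / (t + 2 * δ) := by
      rw [lt_div_iff₀ (by linarith)]
      have hδeq : δ * (3 * (1 - ε)) = ε * t := by
        rw [hδdef]; field_simp
      nlinarith
    linarith
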